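/- The ordinary differential equation λ'(s) = cot(α)·k(s)·|sin_c(λ(s))| − 1 admits an ℓ-periodic solution λ : ℝ → ℝ; moreover, it admits an ℓ-periodic solution with λ(s) > 0 for all s. (Such a periodic solution yields the closed α-involutoid of the closed convex curve with geodesic curvature k in M_c.) -/

import Mathlib

noncomputable section

open Real

/-- `sin_c`: `sinh` when `c = -1`, the identity when `c = 0`. -/
def sinc (c x : ℝ) : ℝ := if c = -1 then Real.sinh x else x

open Set

lemma sinc_strictMono {c : ℝ} (hc : c = -1 ∨ c = 0) : StrictMono (sinc c) := by
  rcases hc with rfl | rfl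
  · have : _root_.sinc (-1) = Real.sinh := by funext x; simp [_root_.sinc]
    rw [this]; exact Real.sinh_strictMono
  · have : _root_.sinc 0 = fun x : ℝ => x := by funext x; norm_num [_root_.sinc]
    rw [this]; exact fun a b h => h

lemma sinc_zero (c : ℝ) : sinc c 0 = 0 := by simp [_root_.sinc]

lemma sinc_surj {c : ℝ} (hc : c = -1 ∨ c = 0) (y : ℝ) : ∃ x, sinc c x = y := by
  rcases hc with rfl | rfl
  · exact ⟨Real.arsinh y, by simp [_root_.sinc, Real.sinh_arsinh]⟩
  · exact ⟨y, by norm_num [_root_.sinc]⟩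

lemma sinc_lipschitzOn {c : ℝ} (hc : c = -1 ∨ c = 0) {M : ℝ} (hM : 0 ≤ M) :
    LipschitzOnWith (Real.cosh M).toNNReal (sinc c) (Set.Icc 0 M) := by
  have hcoe : ((Real.cosh M).toNNReal : ℝ) = Real.cosh M :=
    Real.coe_toNNReal _ (Real.cosh_pos (x := M)).le
  rcases hc with rfl | rfl
  · have hfun : _root_.sinc (-1) = Real.sinh := by funext x; simp [_root_.sinc]
    rw [hfun]
    apply (convex_Icc (0:ℝ) M).lipschitzOnWith_of_nnnorm_deriv_le
      (fun x _ => Real.differentiable_sinh x)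
    intro x hx
    rw [← NNReal.coe_le_coe, coe_nnnorm, hcoe, Real.deriv_sinh, Real.norm_eq_abs,
      abs_of_pos (Real.cosh_pos _)]
    rw [Real.cosh_le_cosh]
    rw [abs_of_nonneg hx.1, abs_of_nonneg hM]
    exact hx.2
  · have hfun : _root_.sinc 0 = fun x : ℝ => x := by funext x; norm_num [_root_.sinc]
    rw [hfun]
    apply (convex_Icc (0:ℝ) M).lipschitzOnWith_of_nnnorm_deriv_le
      (fun x _ => differentiable_id x)
    intro x _
    rw [← NNReal.coe_le_coe, coe_nnnorm, hcoe]
    have : deriv (id : ℝ → ℝ) x = 1 := deriv_id x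
    rw [this, Real.norm_eq_abs]
    have h1 : |(1:ℝ)| = 1 := abs_one
    rw [h1]; exact Real.one_le_cosh M

lemma barrier_upper {f F : ℝ → ℝ} {a b M : ℝ}
    (hf : ∀ t ∈ Set.Icc a b, HasDerivWithinAt f (F t) (Set.Icc a b) t)
    (h0 : f a ≤ M) (hbar : ∀ t ∈ Set.Icc a b, M ≤ f t → F t < 0) :
    ∀ t ∈ Set.Icc a b, f t ≤ M := by
  by_contra hcon
  push_neg at hcon
  obtain ⟨t₂, ht₂, hMt₂⟩ := hcon
  have hab : a ≤ b := le_trans ht₂.1 ht₂.2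
  set S : Set ℝ := {t | t ∈ Icc a b ∧ M < f t} with hS
  have hne : S.Nonempty := ⟨t₂, ht₂, hMt₂⟩
  have hbdd : BddBelow S := ⟨a, fun t ht => ht.1.1⟩
  set t₁ := sInf S with ht₁def
  have hScc : S ⊆ Icc a b := fun t ht => ht.1
  have ht₁cl : t₁ ∈ closure S := csInf_mem_closure hne hbdd
  have ht₁ : t₁ ∈ Icc a b := isClosed_Icc.closure_subset (closure_mono hScc ht₁cl)
  have hcont : ContinuousOn f (Icc a b) := fun t ht => (hf t ht).continuousWithinAt
  have hge : M ≤ f t₁ := by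
    have htend : Filter.Tendsto f (nhdsWithin t₁ S) (nhds (f t₁)) :=
      (hcont t₁ ht₁).mono_left (nhdsWithin_mono _ hScc)
    have hnb : (nhdsWithin t₁ S).NeBot := mem_closure_iff_nhdsWithin_neBot.1 ht₁cl
    refine ge_of_tendsto htend ?_
    filter_upwards [self_mem_nhdsWithin] with x hx
    exact le_of_lt hx.2
  have hle : f t₁ ≤ M := by
    by_contra hgt
    push_neg at hgt
    have ht₁S : t₁ ∈ S := ⟨ht₁, hgt⟩
    have hat₁ : a < t₁ := by
      rcases lt_or_eq_of_le ht₁.1 with h | h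
      · exact h
      · exact absurd (h ▸ hgt) (not_lt.2 h0)
    have htend : Filter.Tendsto f (nhdsWithin t₁ (Icc a b)) (nhds (f t₁)) := hcont t₁ ht₁
    have hev : ∀ᶠ x in nhdsWithin t₁ (Icc a b), M < f x :=
      htend.eventually (eventually_gt_nhds hgt)
    obtain ⟨ε, hε, hev⟩ := Metric.mem_nhdsWithin_iff.1 hev
    set t' := max a (t₁ - ε / 2) with ht'def
    have ht'lt : t' < t₁ := max_lt hat₁ (by linarith)
    have ht'Icc : t' ∈ Icc a b := ⟨le_max_left _ _, le_trans (le_of_lt ht'lt) ht₁.2⟩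
    have hdist : dist t' t₁ < ε := by
      rw [Real.dist_eq, abs_lt]
      constructor <;>
        [linarith [le_max_right a (t₁ - ε / 2)]; linarith [ht'lt]]
    have ht'S : t' ∈ S := ⟨ht'Icc, hev ⟨Metric.mem_ball.2 hdist, ht'Icc⟩⟩
    exact absurd (csInf_le hbdd ht'S) (not_le.2 ht'lt)
  have hfeq : f t₁ = M := le_antisymm hle hge
  have hFneg : F t₁ < 0 := hbar t₁ ht₁ hge
  have hder := hf t₁ ht₁
  rw [hasDerivWithinAt_iff_tendsto_slope] at hder
  have hev : ∀ᶠ x in nhdsWithin t₁ (Icc a b \ {t₁}), slope f t₁ x < 0 :=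
    hder.eventually (eventually_lt_nhds hFneg)
  obtain ⟨ε, hε, hev⟩ := Metric.mem_nhdsWithin_iff.1 hev
  have : t₁ < t₁ + ε := by linarith
  obtain ⟨t, htS, htlt⟩ := (csInf_lt_iff hbdd hne).1 this
  have ht₁le : t₁ ≤ t := csInf_le hbdd htS
  have htne : t ≠ t₁ := by
    intro h
    exact absurd (h ▸ htS.2) (not_lt.2 hle)
  have ht₁lt : t₁ < t := lt_of_le_of_ne ht₁le (Ne.symm htne)
  have hdist : dist t t₁ < ε := by
    rw [Real.dist_eq, abs_lt]; constructor <;> linarith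
  have hslope : slope f t₁ t < 0 := hev ⟨Metric.mem_ball.2 hdist, htS.1, htne⟩
  have : 0 < (f t - f t₁) / (t - t₁) := by
    apply div_pos
    · rw [hfeq]; linarith [htS.2]
    · linarith
  rw [slope_def_field] at hslope
  linarith

lemma barrier_lower {f F : ℝ → ℝ} {a b m : ℝ}
    (hf : ∀ t ∈ Set.Icc a b, HasDerivWithinAt f (F t) (Set.Icc a b) t)
    (h0 : m ≤ f a) (hbar : ∀ t ∈ Set.Icc a b, f t ≤ m → 0 < F t) :
    ∀ t ∈ Set.Icc a b, m ≤ f t := by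
  have := barrier_upper (f := fun t => -f t) (F := fun t => -F t) (M := -m)
    (fun t ht => (hf t ht).neg) (by simpa using h0)
    (fun t ht hm => by
      simp only [neg_lt_zero]
      have h3 : f t ≤ m := by
        have : -m ≤ -f t := hm
        linarith
      exact hbar t ht h3)
  intro t ht
  have h2 : -f t ≤ -m := this t ht
  linarith

set_option maxHeartbeats 3000000 in
theorem closed_involutoid_exists
    (α : ℝ) (hα : α ∈ Set.Ioo 0 (Real.pi / 2))
    (c : ℝ) (hc : c = -1 ∨ c = 0)
    (ℓ : ℝ) (hℓ : 0 < ℓ)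
    (k : ℝ → ℝ) (hk : Continuous k) (hper : ∀ s, k (s + ℓ) = k s)
    (hkpos : ∀ s, 0 < k s) :
    (∃ lam : ℝ → ℝ, Differentiable ℝ lam ∧
      (∀ s, deriv lam s =
        (Real.cos α / Real.sin α) * k s * |sinc c (lam s)| - 1) ∧
      (∀ s, lam (s + ℓ) = lam s)) ∧
    (∃ lam : ℝ → ℝ, Differentiable ℝ lam ∧
      (∀ s, deriv lam s =
        (Real.cos α / Real.sin α) * k s * |sinc c (lam s)| - 1) ∧
      (∀ s, lam (s + ℓ) = lam s) ∧ (∀ s, 0 < lam s)) := by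
  obtain ⟨hα0, hαpi⟩ := hα
  have hpi := Real.pi_pos
  have hsin : 0 < Real.sin α :=
    Real.sin_pos_of_pos_of_lt_pi hα0 (by linarith)
  have hcos : 0 < Real.cos α :=
    Real.cos_pos_of_mem_Ioo ⟨by linarith, hαpi⟩
  set q : ℝ := Real.cos α / Real.sin α with hqdef
  have hq0 : 0 < q := div_pos hcos hsin
  -- bounds on k
  have hperiodic : Function.Periodic k ℓ := hper
  obtain ⟨smin, _, hsmin⟩ :=
    isCompact_Icc.exists_isMinOn (nonempty_Icc.2 hℓ.le) hk.continuousOn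
  obtain ⟨smax, _, hsmax⟩ :=
    isCompact_Icc.exists_isMaxOn (nonempty_Icc.2 hℓ.le) hk.continuousOn
  set kmin : ℝ := k smin with hkmindef
  set kmax : ℝ := k smax with hkmaxdef
  have hkmin : ∀ s, kmin ≤ k s := by
    intro s
    obtain ⟨y, hy, hys⟩ := hperiodic.exists_mem_Ico₀ hℓ s
    rw [hys]; exact hsmin (Ico_subset_Icc_self hy)
  have hkmax : ∀ s, k s ≤ kmax := by
    intro s
    obtain ⟨y, hy, hys⟩ := hperiodic.exists_mem_Ico₀ hℓ s
    rw [hys]; exact hsmax (Ico_subset_Icc_self hy)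
  have h0min : 0 < kmin := hkpos smin
  have hminmax : kmin ≤ kmax := hkmax smin
  have h0max : 0 < kmax := lt_of_lt_of_le h0min hminmax
  -- thresholds
  obtain ⟨m, hm⟩ := sinc_surj hc (1 / (2 * (q * kmax)))
  obtain ⟨M, hM⟩ := sinc_surj hc (2 / (q * kmin))
  have hqmax : 0 < q * kmax := mul_pos hq0 h0max
  have hqmin : 0 < q * kmin := mul_pos hq0 h0min
  have hmono := sinc_strictMono hc
  have hmpos : 0 < m := by
    have h1 : sinc c 0 < sinc c m := by
      rw [_root_.sinc_zero, hm]; positivity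
    exact hmono.lt_iff_lt.1 h1
  have hmM : m < M := by
    apply hmono.lt_iff_lt.1
    rw [hm, hM]
    rw [div_lt_div_iff₀ (by positivity) hqmin]
    have : q * kmin ≤ q * kmax := by nlinarith
    nlinarith
  have hMpos : 0 < M := lt_trans hmpos hmM
  -- the clamp and the (clamped) field
  set proj : ℝ → ℝ := fun x => min M (max m x) with hprojdef
  have hprojmem : ∀ x, proj x ∈ Icc m M :=
    fun x => ⟨le_min hmM.le (le_max_left _ _), min_le_left _ _⟩
  have hprojeq : ∀ x ∈ Icc m M, proj x = x := by
    intro x hx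
    simp only [hprojdef]
    rw [max_eq_right hx.1, min_eq_right hx.2]
  set Φ : ℝ → ℝ := fun x => |sinc c (proj x)| with hΦdef
  have hsincpos : ∀ u ∈ Icc m M, 0 < sinc c u := by
    intro u hu
    have : sinc c 0 < sinc c u := hmono (lt_of_lt_of_le hmpos hu.1)
    rwa [_root_.sinc_zero] at this
  have hΦval : ∀ x, Φ x = sinc c (proj x) :=
    fun x => abs_of_pos (hsincpos _ (hprojmem x))
  have hΦm : ∀ x, x ≤ m → Φ x = 1 / (2 * (q * kmax)) := by
    intro x hx
    rw [hΦval]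
    have : proj x = m := by
      simp only [hprojdef]
      rw [max_eq_left hx, min_eq_right hmM.le]
    rw [this, hm]
  have hΦM : ∀ x, M ≤ x → Φ x = 2 / (q * kmin) := by
    intro x hx
    rw [hΦval]
    have : proj x = M := by
      simp only [hprojdef]
      rw [min_eq_left]
      exact le_trans hx (le_max_right _ _)
    rw [this, hM]
  have hΦmem : ∀ x, Φ x ∈ Icc (0:ℝ) (sinc c M) := by
    intro x
    refine ⟨abs_nonneg _, ?_⟩
    rw [hΦval]
    exact hmono.monotone (hprojmem x).2
  -- Lipschitz bound on Φ
  set Lf : ℝ := Real.cosh M with hLfdef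
  have hLf0 : 0 < Lf := Real.cosh_pos (x := M)
  have hΦlip : ∀ x y, |Φ x - Φ y| ≤ Lf * |x - y| := by
    intro x y
    have hsub : Icc m M ⊆ Icc 0 M := Icc_subset_Icc hmpos.le le_rfl
    have h1 : |Φ x - Φ y| ≤ |sinc c (proj x) - sinc c (proj y)| := by
      rw [hΦdef]; exact abs_abs_sub_abs_le_abs_sub _ _
    have h2 : |sinc c (proj x) - sinc c (proj y)| ≤ Lf * |proj x - proj y| := by
      have := (sinc_lipschitzOn hc hMpos.le).dist_le_mul (proj x)
        (hsub (hprojmem x)) (proj y) (hsub (hprojmem y))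
      rwa [Real.dist_eq, Real.dist_eq, Real.coe_toNNReal _ hLf0.le] at this
    have h3 : |proj x - proj y| ≤ |x - y| := by
      have hlip1 : LipschitzWith 1 proj :=
        (LipschitzWith.id.const_max m).const_min M
      have := hlip1.dist_le_mul x y
      rwa [Real.dist_eq, Real.dist_eq, NNReal.coe_one, one_mul] at this
    calc |Φ x - Φ y| ≤ Lf * |proj x - proj y| := le_trans h1 h2
      _ ≤ Lf * |x - y| := by nlinarith
  -- the vector field (time reversed)
  set G : ℝ → ℝ → ℝ := fun t x => 1 - q * k (-t) * Φ x with hGdef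
  set CB : ℝ := 1 + q * kmax * sinc c M with hCBdef
  have hsincM : 0 < sinc c M := hsincpos M ⟨hmM.le, le_rfl⟩
  have hCB0 : 0 < CB := by positivity
  have hGbound : ∀ t x, |G t x| ≤ CB := by
    intro t x
    have hkt : 0 < k (-t) := hkpos _
    have h1 : 0 ≤ q * k (-t) * Φ x := by
      have := (hΦmem x).1; positivity
    have h2 : q * k (-t) * Φ x ≤ q * kmax * sinc c M := by
      have h3 := (hΦmem x).2
      have h4 := (hΦmem x).1
      have h5 : q * k (-t) ≤ q * kmax :=
        mul_le_mul_of_nonneg_left (hkmax (-t)) hq0.le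
      exact mul_le_mul h5 h3 h4 (by positivity)
    rw [abs_le]
    constructor <;> simp only [hGdef, hCBdef] <;> linarith
  set KG : NNReal := (q * kmax * Lf).toNNReal with hKGdef
  have hKGcoe : (KG : ℝ) = q * kmax * Lf :=
    Real.coe_toNNReal _ (by positivity)
  have hGlip : ∀ t, LipschitzWith KG (G t) := by
    intro t
    apply LipschitzWith.of_dist_le_mul
    intro x y
    rw [Real.dist_eq, Real.dist_eq, hKGcoe]
    have hkt : 0 < k (-t) := hkpos _
    have h1 : G t x - G t y = -(q * k (-t) * (Φ x - Φ y)) := by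
      simp only [hGdef]; ring
    rw [h1, abs_neg, abs_mul, abs_of_pos (by positivity : (0:ℝ) < q * k (-t))]
    have h2 := hΦlip x y
    have h5 : q * k (-t) ≤ q * kmax :=
      mul_le_mul_of_nonneg_left (hkmax (-t)) hq0.le
    calc q * k (-t) * |Φ x - Φ y| ≤ q * k (-t) * (Lf * |x - y|) :=
          mul_le_mul_of_nonneg_left h2 (by positivity)
      _ ≤ q * kmax * (Lf * |x - y|) :=
          mul_le_mul_of_nonneg_right h5 (by positivity)
      _ = q * kmax * Lf * |x - y| := by ring
  have hGcont : ∀ x, Continuous fun t => G t x := by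
    intro x
    simp only [hGdef]
    exact continuous_const.sub
      (((continuous_const.mul (hk.comp continuous_neg)).mul continuous_const))
  -- Picard–Lindelöf: existence of local solutions
  have hex : ∀ x₀ : ℝ, ∃ f : ℝ → ℝ, f 0 = x₀ ∧
      ∀ t ∈ Icc 0 ℓ, HasDerivWithinAt f (G t (f t)) (Icc 0 ℓ) t := by
    intro x₀
    have hCBℓ : (0:ℝ) ≤ CB * ℓ := by positivity
    apply IsPicardLindelof.exists_eq_forall_mem_Icc_hasDerivWithinAt₀ (f := G)
      (t₀ := (⟨0, le_rfl, hℓ.le⟩ : Icc (0:ℝ) ℓ)) (a := ⟨CB * ℓ, hCBℓ⟩)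
      (L := ⟨CB, hCB0.le⟩) (K := KG)
    constructor
    · exact fun t _ => (hGlip t).lipschitzOnWith
    · exact fun x _ => (hGcont x).continuousOn
    · intro t _ x _
      show ‖G t x‖ ≤ CB
      rw [Real.norm_eq_abs]
      exact hGbound t x
    · show CB * max (ℓ - 0) (0 - 0) ≤ CB * ℓ - ((0:NNReal):ℝ)
      rw [sub_zero, sub_zero, max_eq_left hℓ.le, NNReal.coe_zero, sub_zero]
  choose sol hsol0 hsolD using hex
  -- invariance of [m, M]
  have hstay : ∀ x₀ ∈ Icc m M, ∀ t ∈ Icc 0 ℓ, sol x₀ t ∈ Icc m M := by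
    intro x₀ hx₀
    have hup : ∀ t ∈ Icc 0 ℓ, sol x₀ t ≤ M := by
      apply barrier_upper (F := fun t => G t (sol x₀ t)) (hsolD x₀)
      · rw [hsol0]; exact hx₀.2
      · intro t _ hMle
        have hΦ : Φ (sol x₀ t) = 2 / (q * kmin) := hΦM _ hMle
        simp only [hGdef, hΦ]
        have h5 : q * kmin ≤ q * k (-t) :=
          mul_le_mul_of_nonneg_left (hkmin (-t)) hq0.le
        have h6 : q * kmin * (2 / (q * kmin)) = 2 := by
          field_simp
        have h7 : q * kmin * (2 / (q * kmin)) ≤ q * k (-t) * (2 / (q * kmin)) :=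
          mul_le_mul_of_nonneg_right h5 (by positivity)
        linarith
    have hlo : ∀ t ∈ Icc 0 ℓ, m ≤ sol x₀ t := by
      apply barrier_lower (F := fun t => G t (sol x₀ t)) (hsolD x₀)
      · rw [hsol0]; exact hx₀.1
      · intro t _ hmle
        have hΦ : Φ (sol x₀ t) = 1 / (2 * (q * kmax)) := hΦm _ hmle
        simp only [hGdef, hΦ]
        have h5 : q * k (-t) ≤ q * kmax :=
          mul_le_mul_of_nonneg_left (hkmax (-t)) hq0.le
        have h6 : q * kmax * (1 / (2 * (q * kmax))) = 1 / 2 := by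
          field_simp
        have h7 : q * k (-t) * (1 / (2 * (q * kmax))) ≤ q * kmax * (1 / (2 * (q * kmax))) :=
          mul_le_mul_of_nonneg_right h5 (by positivity)
        linarith
    exact fun t ht => ⟨hlo t ht, hup t ht⟩
  -- solutions as trajectories (for Grönwall)
  have hIci : ∀ x₀ : ℝ, ∀ t ∈ Ico 0 ℓ,
      HasDerivWithinAt (sol x₀) (G t (sol x₀ t)) (Ici t) t := by
    intro x₀ t ht
    exact (hsolD x₀ t (Ico_subset_Icc_self ht)).mono_of_mem_nhdsWithin
      (Icc_mem_nhdsGE_of_mem ht)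
  have hcontsol : ∀ x₀ : ℝ, ContinuousOn (sol x₀) (Icc 0 ℓ) :=
    fun x₀ t ht => (hsolD x₀ t ht).continuousWithinAt
  -- continuity of the Poincaré map
  set P : ℝ → ℝ := fun x => sol x ℓ with hPdef
  have hPlip : ∀ x y : ℝ, dist (P x) (P y) ≤ dist x y * Real.exp (KG * ℓ) := by
    intro x y
    have h0 : dist (sol x 0) (sol y 0) ≤ dist x y := by
      rw [hsol0, hsol0]
    have := dist_le_of_trajectories_ODE (v := G) hGlip (hcontsol x) (hIci x)
      (hcontsol y) (hIci y) h0 ℓ ⟨hℓ.le, le_rfl⟩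
    simpa using this
  have hPcont : Continuous P := by
    apply LipschitzWith.continuous (K := (Real.exp (KG * ℓ)).toNNReal)
    apply LipschitzWith.of_dist_le_mul
    intro x y
    rw [Real.coe_toNNReal _ (Real.exp_pos _).le, mul_comm]
    exact hPlip x y
  have hPmem : ∀ x ∈ Icc m M, P x ∈ Icc m M :=
    fun x hx => hstay x hx ℓ ⟨hℓ.le, le_rfl⟩
  -- fixed point of the Poincaré map
  obtain ⟨xs, hxs, hfix⟩ : ∃ x ∈ Icc m M, P x - x = 0 := by
    have hcont2 : ContinuousOn (fun x => P x - x) (Icc m M) :=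
      (hPcont.sub continuous_id).continuousOn
    have hmem : (0:ℝ) ∈ Icc (P M - M) (P m - m) := by
      constructor
      · have := (hPmem M ⟨hmM.le, le_rfl⟩).2; linarith
      · have := (hPmem m ⟨le_rfl, hmM.le⟩).1; linarith
    have := intermediate_value_Icc' hmM.le hcont2 hmem
    obtain ⟨x, hx, hx0⟩ := this
    exact ⟨x, hx, hx0⟩
  have hfix' : P xs = xs := by linarith [hfix]
  -- the fixed solution and its periodic extension
  set σ : ℝ → ℝ := sol xs with hσdef
  have hσ0 : σ 0 = xs := hsol0 xs
  have hσℓ : σ ℓ = xs := hfix'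
  have hσmem : ∀ t ∈ Icc 0 ℓ, σ t ∈ Icc m M := hstay xs hxs
  have hσD : ∀ t ∈ Icc 0 ℓ, HasDerivWithinAt σ (G t (σ t)) (Icc 0 ℓ) t := hsolD xs
  have hfrac : ∀ t : ℝ, t - ℓ * ⌊t / ℓ⌋ ∈ Ico 0 ℓ := by
    intro t
    have h1 : (⌊t/ℓ⌋ : ℝ) ≤ t/ℓ := Int.floor_le _
    have h2 : t/ℓ < ⌊t/ℓ⌋ + 1 := Int.lt_floor_add_one _
    have e : ℓ * (t / ℓ) = t := by field_simp
    have h3 : ℓ * (⌊t/ℓ⌋:ℝ) ≤ ℓ * (t/ℓ) := mul_le_mul_of_nonneg_left h1 hℓ.le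
    have h4 : ℓ * (t/ℓ) < ℓ * ((⌊t/ℓ⌋:ℝ)+1) := mul_lt_mul_of_pos_left h2 hℓ
    have h5 : ℓ * ((⌊t/ℓ⌋:ℝ)+1) = ℓ * (⌊t/ℓ⌋:ℝ) + ℓ := by ring
    rw [e] at h3 h4
    constructor
    · linarith
    · linarith
  set μ : ℝ → ℝ := fun t => σ (t - ℓ * ⌊t / ℓ⌋) with hμdef
  have hμmem : ∀ t, μ t ∈ Icc m M := fun t => hσmem _ (Ico_subset_Icc_self (hfrac t))
  have hfloor : ∀ (n : ℤ) (u : ℝ), ℓ * (n:ℝ) ≤ u → u < ℓ * ((n:ℝ)+1) → ⌊u / ℓ⌋ = n := by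
    intro n u h1 h2
    rw [Int.floor_eq_iff]
    constructor
    · rw [le_div_iff₀ hℓ]; linarith
    · rw [div_lt_iff₀ hℓ]; push_cast; linarith
  have hμeq : ∀ (n : ℤ) (u : ℝ), ℓ * (n:ℝ) ≤ u → u < ℓ * ((n:ℝ)+1) →
      μ u = σ (u - ℓ * (n:ℝ)) := by
    intro n u h1 h2
    simp only [hμdef]
    rw [hfloor n u h1 h2]
  have hkshift : ∀ (n : ℤ) (x : ℝ), k (x + (n:ℝ) * ℓ) = k x := by
    intro n x
    have := hperiodic.sub_zsmul_eq (-n) (x := x)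
    simpa [zsmul_eq_mul] using this
  have hGshift : ∀ (n : ℤ) (t x : ℝ), G (t - ℓ * (n:ℝ)) x = G t x := by
    intro n t x
    simp only [hGdef]
    have e : -(t - ℓ * (n:ℝ)) = -t + (n:ℝ) * ℓ := by ring
    rw [e, hkshift]
  have hμper : ∀ t, μ (t + ℓ) = μ t := by
    intro t
    simp only [hμdef]
    have h1 : (t + ℓ) / ℓ = t / ℓ + 1 := by field_simp
    rw [h1, Int.floor_add_one]
    congr 1
    push_cast
    ring
  -- the periodic extension solves the ODE everywhere
  have hμD : ∀ t : ℝ, HasDerivAt μ (G t (μ t)) t := by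
    intro t
    set n : ℤ := ⌊t / ℓ⌋ with hn
    have hr := hfrac t
    set r : ℝ := t - ℓ * n with hrdef
    have hexp : ℓ * ((n:ℝ)+1) = ℓ * (n:ℝ) + ℓ := by ring
    have hμt : μ t = σ r := rfl
    rcases lt_or_eq_of_le hr.1 with hposr | hzr
    · -- interior case
      have hmemIcc : Icc (0:ℝ) ℓ ∈ nhds r := Icc_mem_nhds hposr hr.2
      have hσD' : HasDerivAt σ (G r (σ r)) r :=
        (hσD r ⟨hr.1, hr.2.le⟩).hasDerivAt hmemIcc
      have hinner : HasDerivAt (fun u : ℝ => u - ℓ * (n:ℝ)) 1 t := by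
        simpa using (hasDerivAt_id t).sub_const (ℓ * (n:ℝ))
      have hshift : HasDerivAt (fun u => σ (u - ℓ * (n:ℝ))) (G r (σ r)) t := by
        have := HasDerivAt.comp t hσD' hinner
        rw [mul_one] at this; exact this
      have hev : μ =ᶠ[nhds t] fun u => σ (u - ℓ * (n:ℝ)) := by
        have hnb : Ioo (ℓ * (n:ℝ)) (ℓ * ((n:ℝ)+1)) ∈ nhds t := by
          apply Ioo_mem_nhds
          · linarith [hposr]
          · have := hr.2; linarith [hexp]
        filter_upwards [hnb] with u hu
        exact hμeq n u hu.1.le hu.2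
      have hfin := hshift.congr_of_eventuallyEq hev
      rw [hμt, ← hGshift n t (σ r)]
      exact hfin
    · -- boundary case : t = ℓ * n
      have htn : t = ℓ * (n:ℝ) := by
        have : r = 0 := hzr.symm
        rw [hrdef] at this; linarith
      have hμt0 : μ t = xs := by rw [hμt, ← hzr, hσ0]
      -- right derivative
      have hσD0 : HasDerivWithinAt σ (G 0 (σ 0)) (Icc 0 ℓ) 0 := hσD 0 ⟨le_rfl, hℓ.le⟩
      have hinnerR : HasDerivWithinAt (fun u : ℝ => u - ℓ * (n:ℝ)) 1
          (Icc (ℓ*(n:ℝ)) (ℓ*(n:ℝ) + ℓ)) t := by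
        simpa using ((hasDerivAt_id t).sub_const (ℓ * (n:ℝ))).hasDerivWithinAt
      have hmapsR : Set.MapsTo (fun u : ℝ => u - ℓ * (n:ℝ))
          (Icc (ℓ*(n:ℝ)) (ℓ*(n:ℝ) + ℓ)) (Icc 0 ℓ) := by
        intro u hu
        refine ⟨?_, ?_⟩
        · show (0:ℝ) ≤ u - ℓ * (n:ℝ); linarith [hu.1]
        · show u - ℓ * (n:ℝ) ≤ ℓ; linarith [hu.2]
      have hσD0' : HasDerivWithinAt σ (G 0 (σ 0)) (Icc 0 ℓ)
          ((fun u : ℝ => u - ℓ * (n:ℝ)) t) := by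
        show HasDerivWithinAt σ (G 0 (σ 0)) (Icc 0 ℓ) (t - ℓ * (n:ℝ))
        have e : t - ℓ * (n:ℝ) = 0 := by linarith
        rw [e]; exact hσD0
      have hshiftR : HasDerivWithinAt (fun u : ℝ => σ (u - ℓ * (n:ℝ))) (G 0 xs)
          (Icc (ℓ*(n:ℝ)) (ℓ*(n:ℝ) + ℓ)) t := by
        have := HasDerivWithinAt.comp t hσD0' hinnerR hmapsR
        rw [mul_one, hσ0] at this; exact this
      have hRmem : Icc (ℓ*(n:ℝ)) (ℓ*(n:ℝ) + ℓ) ∈ nhdsWithin t (Ici t) :=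
        Icc_mem_nhdsGE_of_mem ⟨by linarith, by linarith⟩
      have hR : HasDerivWithinAt μ (G 0 xs) (Ici t) t := by
        apply (hshiftR.mono_of_mem_nhdsWithin hRmem).congr_of_eventuallyEq
        · have hmem2 : Ico t (t + ℓ) ∈ nhdsWithin t (Ici t) :=
            Ico_mem_nhdsGE_of_mem ⟨le_rfl, by linarith⟩
          filter_upwards [hmem2] with u hu
          exact hμeq n u (by linarith [hu.1]) (by linarith [hu.2, hexp])
        · show μ t = σ (t - ℓ * (n:ℝ))
          exact hμt
      -- left derivative
      have hσDℓ : HasDerivWithinAt σ (G 0 xs) (Icc 0 ℓ) ℓ := by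
        have h1 := hσD ℓ ⟨hℓ.le, le_rfl⟩
        have hk0 : k (-ℓ) = k 0 := by
          have := hper (-ℓ)
          simpa using this.symm
        have h2 : G ℓ (σ ℓ) = G 0 xs := by
          rw [hσℓ]
          simp only [hGdef]
          rw [hk0, neg_zero]
        rwa [h2] at h1
      set n' : ℤ := n - 1 with hn'def
      have hn'r : (n' : ℝ) = (n : ℝ) - 1 := by rw [hn'def]; push_cast; ring
      have hln' : ℓ * (n':ℝ) = t - ℓ := by rw [hn'r, htn]; ring
      have hexp' : ℓ * ((n':ℝ)+1) = ℓ * (n':ℝ) + ℓ := by ring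
      have hmapsL : Set.MapsTo (fun u : ℝ => u - ℓ * (n':ℝ))
          (Icc (ℓ*(n':ℝ)) (ℓ*(n':ℝ) + ℓ)) (Icc 0 ℓ) := by
        intro u hu
        refine ⟨?_, ?_⟩
        · show (0:ℝ) ≤ u - ℓ * (n':ℝ); linarith [hu.1]
        · show u - ℓ * (n':ℝ) ≤ ℓ; linarith [hu.2]
      have hσDℓ' : HasDerivWithinAt σ (G 0 xs) (Icc 0 ℓ)
          ((fun u : ℝ => u - ℓ * (n':ℝ)) t) := by
        show HasDerivWithinAt σ (G 0 xs) (Icc 0 ℓ) (t - ℓ * (n':ℝ))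
        have e : t - ℓ * (n':ℝ) = ℓ := by linarith [hln']
        rw [e]; exact hσDℓ
      have hinnerL : HasDerivWithinAt (fun u : ℝ => u - ℓ * (n':ℝ)) 1
          (Icc (ℓ*(n':ℝ)) (ℓ*(n':ℝ) + ℓ)) t := by
        simpa using ((hasDerivAt_id t).sub_const (ℓ * (n':ℝ))).hasDerivWithinAt
      have hshiftL : HasDerivWithinAt (fun u : ℝ => σ (u - ℓ * (n':ℝ))) (G 0 xs)
          (Icc (ℓ*(n':ℝ)) (ℓ*(n':ℝ) + ℓ)) t := by
        have := HasDerivWithinAt.comp t hσDℓ' hinnerL hmapsL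
        rw [mul_one] at this; exact this
      have hLmem : Icc (ℓ*(n':ℝ)) (ℓ*(n':ℝ) + ℓ) ∈ nhdsWithin t (Iic t) :=
        Icc_mem_nhdsLE_of_mem ⟨by linarith [hln'], by linarith [hln']⟩
      have hvalL : σ (t - ℓ * (n':ℝ)) = xs := by
        have e : t - ℓ * (n':ℝ) = ℓ := by linarith [hln']
        rw [e, hσℓ]
      have hL : HasDerivWithinAt μ (G 0 xs) (Iic t) t := by
        apply (hshiftL.mono_of_mem_nhdsWithin hLmem).congr_of_eventuallyEq
        · have hmem2 : Ioc (t - ℓ) t ∈ nhdsWithin t (Iic t) :=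
            Ioc_mem_nhdsLE_of_mem ⟨by linarith, le_rfl⟩
          filter_upwards [hmem2] with u hu
          rcases lt_or_eq_of_le hu.2 with hlt | heq
          · apply hμeq n' u
            · linarith [hu.1, hln']
            · linarith [hlt, hln', hexp']
          · rw [heq, hμt0, hvalL]
        · rw [hμt0, hvalL]
      -- combine the two one-sided derivatives
      have hcomb := hL.union hR
      rw [Iic_union_Ici] at hcomb
      have hfinal : HasDerivAt μ (G 0 xs) t := hasDerivWithinAt_univ.1 hcomb
      rw [hμt0, ← hGshift n t xs]
      have e : t - ℓ * (n:ℝ) = 0 := by linarith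
      rw [e]
      exact hfinal
  -- the desired periodic solution
  set lam : ℝ → ℝ := fun s => μ (-s) with hlamdef
  have hlamD : ∀ s, HasDerivAt lam (q * k s * |sinc c (lam s)| - 1) s := by
    intro s
    have h1 : HasDerivAt (fun x : ℝ => -x) (-1) s := by
      exact (hasDerivAt_id s).neg
    have h2 := HasDerivAt.comp s (hμD (-s)) h1
    have h4 : Φ (μ (-s)) = |sinc c (lam s)| := by
      simp only [hΦdef]
      rw [hprojeq _ (hμmem (-s))]
    have h3 : G (-s) (μ (-s)) * (-1) = q * k s * |sinc c (lam s)| - 1 := by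
      simp only [hGdef]
      rw [h4, neg_neg]
      ring
    rw [← h3]
    exact h2
  have hDiff : Differentiable ℝ lam := fun s => (hlamD s).differentiableAt
  have hderiv : ∀ s, deriv lam s = q * k s * |sinc c (lam s)| - 1 :=
    fun s => (hlamD s).deriv
  have hperlam : ∀ s, lam (s + ℓ) = lam s := by
    intro s
    show μ (-(s + ℓ)) = μ (-s)
    have h1 := hμper (-s - ℓ)
    have e : -s - ℓ + ℓ = -s := by ring
    rw [e] at h1
    rw [show -(s+ℓ) = -s - ℓ by ring]
    exact h1.symm
  have hpos : ∀ s, 0 < lam s := fun s => lt_of_lt_of_le hmpos (hμmem (-s)).1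
  exact ⟨⟨lam, hDiff, hderiv, hperlam⟩, ⟨lam, hDiff, hderiv, hperlam, hpos⟩⟩
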